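/- arXiv:1311.7407 — 4 statements merged into one kernel-verified Lean document; each statement's English description precedes it below -/
import Mathlib

section
/- Let f ∈ F_p[x_1,…,x_n] be a nonzero polynomial of total degree at most d with individual degrees at most p-1. Then the probability that f(a) ≠ 0 for a uniformly random a ∈ F_p^n is at least p^{-d/(p-1)}. -/
open scoped BigOperators

noncomputable section

/-- The set of functions `F_p^n → F_p` computed by polynomials of total degree at most `d`
with individual degrees at most `p - 1`. -/
def PolyFns (p n d : ℕ) : Set ((Fin n → ZMod p) → ZMod p) :=
  {f | ∃ P : MvPolynomial (Fin n) (ZMod p),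
    P.totalDegree ≤ d ∧ (∀ i, P.degreeOf i ≤ p - 1) ∧ ∀ x, MvPolynomial.eval x P = f x}

/-- Inner product `⟨f,g⟩ = Σ_x f(x)·g(x)` on functions `F_p^n → F_p`. -/
def dotF {p n : ℕ} [NeZero p] (f g : (Fin n → ZMod p) → ZMod p) : ZMod p :=
  ∑ x : Fin n → ZMod p, f x * g x

/-- The dual of a set of functions under the inner product `dotF`. -/
def dualSet {p n : ℕ} [NeZero p] (S : Set ((Fin n → ZMod p) → ZMod p)) :
    Set ((Fin n → ZMod p) → ZMod p) :=
  {g | ∀ f ∈ S, dotF g f = 0}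

open MvPolynomial Finset in
open MvPolynomial

/-- Key analytic inequality: for `t ≤ p - 1`, `p ^ (-t/(p-1)) ≤ (p - t)/p`. -/
lemma key_ineq (p t : ℕ) (hp : 2 ≤ p) (ht : t ≤ p - 1) :
    (p : ℝ) ^ (-(t : ℝ) / ((p : ℝ) - 1)) ≤ ((p : ℝ) - t) / p := by
  set q : ℝ := (p : ℝ) with hq
  have hq2 : (2:ℝ) ≤ q := by rw [hq]; exact_mod_cast hp
  have hq1 : (1:ℝ) < q := by linarith
  have hq0 : (0:ℝ) < q := by linarith
  have hq1' : (0:ℝ) < q - 1 := by linarith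
  have htq : (t : ℝ) ≤ q - 1 := by
    have : (t : ℝ) ≤ ((p - 1 : ℕ) : ℝ) := by exact_mod_cast ht
    rwa [Nat.cast_sub (by omega), Nat.cast_one] at this
  set w : ℝ := (t : ℝ) / (q - 1) with hw
  have hw0 : 0 ≤ w := div_nonneg (Nat.cast_nonneg t) hq1'.le
  have hw1 : w ≤ 1 := (div_le_one hq1').2 htq
  have amgm := Real.geom_mean_le_arith_mean2_weighted (by linarith : (0:ℝ) ≤ 1 - w) hw0
    zero_le_one (by positivity : (0:ℝ) ≤ 1/q) (by ring)
  have h1 : (1:ℝ) ^ (1 - w) * (1/q) ^ w = q ^ (-(t:ℝ)/(q-1)) := by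
    rw [Real.one_rpow, one_mul, one_div, Real.inv_rpow hq0.le, ← Real.rpow_neg hq0.le,
      neg_div, hw]
  have h2 : (1 - w) * 1 + w * (1/q) = (q - t)/q := by
    rw [hw]; field_simp; ring
  rw [h1, h2] at amgm
  exact amgm

open MvPolynomial Finset in
set_option maxHeartbeats 1000000 in
lemma count_nonzero (p : ℕ) (hp : p.Prime) [NeZero p] :
    ∀ (n : ℕ) (f : MvPolynomial (Fin n) (ZMod p)), f ≠ 0 → (∀ i, f.degreeOf i ≤ p - 1) →
    (p:ℝ)^n * (p:ℝ) ^ (-(f.totalDegree:ℝ)/((p:ℝ)-1)) ≤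
      ((Finset.univ.filter fun a : Fin n → ZMod p => MvPolynomial.eval a f ≠ 0).card : ℝ) := by
  haveI := Fact.mk hp
  haveI : NeZero p := ⟨hp.pos.ne'⟩
  have hp2 : 2 ≤ p := hp.two_le
  have hq1 : (1:ℝ) < (p:ℝ) := by exact_mod_cast hp2
  have hq0 : (0:ℝ) < (p:ℝ) := by linarith
  have hq1' : (0:ℝ) < (p:ℝ) - 1 := by linarith
  intro n
  induction n with
  | zero =>
    intro f hf hind
    obtain ⟨c, rfl⟩ := MvPolynomial.C_surjective (Fin 0) f
    have hc : c ≠ 0 := fun h => hf (by rw [h, map_zero])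
    simp [MvPolynomial.totalDegree_C, hc, Finset.filter_true_of_mem]
  | succ n ih =>
    intro f hf hind
    set F := MvPolynomial.finSuccEquiv (ZMod p) n f with hF
    have hF0 : F ≠ 0 := by
      rw [hF]; exact (map_ne_zero_iff _ (AlgEquiv.injective _)).2 hf
    set t := F.natDegree with htdef
    have ht : t ≤ p - 1 := by
      rw [htdef, natDegree_finSuccEquiv]; exact hind 0
    have htp : (t:ℝ) ≤ (p:ℝ) - 1 := by
      have : (t : ℝ) ≤ ((p - 1 : ℕ) : ℝ) := by exact_mod_cast ht
      rwa [Nat.cast_sub (by omega), Nat.cast_one] at this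
    set g := F.coeff t with hgdef
    have hg0 : g ≠ 0 := by
      rw [hgdef, htdef]; exact Polynomial.leadingCoeff_ne_zero.mpr hF0
    have hgdeg : ∀ i, g.degreeOf i ≤ p - 1 :=
      fun i => le_trans (degreeOf_coeff_finSuccEquiv f i t) (hind i.succ)
    have hgt : g.totalDegree + t ≤ f.totalDegree :=
      totalDegree_coeff_finSuccEquiv_add_le f t hg0
    have IH := ih g hg0 hgdeg
    set S := (Finset.univ.filter fun x : Fin n → ZMod p => MvPolynomial.eval x g ≠ 0) with hS
    set A := (Finset.univ.filter fun a : Fin (n+1) → ZMod p => MvPolynomial.eval a f ≠ 0) with hA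
    -- per-x bound
    have perx : ∀ x ∈ S, (p - t : ℕ) ≤
        (Finset.univ.filter fun y : ZMod p => MvPolynomial.eval (Fin.cons y x) f ≠ 0).card := by
      intro x hx
      rw [hS, Finset.mem_filter] at hx
      set Q := F.map (MvPolynomial.eval x) with hQ
      have hQc : Q.coeff t ≠ 0 := by
        rw [hQ, Polynomial.coeff_map]; exact hx.2
      have hQ0 : Q ≠ 0 := fun h => hQc (by rw [h, Polynomial.coeff_zero])
      have hQd : Q.natDegree ≤ t := Polynomial.natDegree_map_le
      have heval : ∀ y, MvPolynomial.eval (Fin.cons y x) f = Q.eval y := by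
        intro y; rw [hQ, hF]; exact eval_eq_eval_mv_eval' x y f
      have hzero : (Finset.univ.filter fun y : ZMod p => MvPolynomial.eval (Fin.cons y x) f = 0).card ≤ t := by
        have hsub : (Finset.univ.filter fun y : ZMod p => MvPolynomial.eval (Fin.cons y x) f = 0)
            ⊆ Q.roots.toFinset := by
          intro y hy
          rw [Finset.mem_filter, heval] at hy
          rw [Multiset.mem_toFinset, Polynomial.mem_roots hQ0]
          exact hy.2
        calc _ ≤ Q.roots.toFinset.card := Finset.card_le_card hsub
          _ ≤ Multiset.card Q.roots := Multiset.toFinset_card_le _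
          _ ≤ Q.natDegree := Polynomial.card_roots' Q
          _ ≤ t := hQd
      have hsplit := Finset.card_filter_add_card_filter_not
        (s := (Finset.univ : Finset (ZMod p)))
        (p := fun y => MvPolynomial.eval (Fin.cons y x) f = 0)
      have hcard : (Finset.univ : Finset (ZMod p)).card = p := by
        rw [Finset.card_univ, ZMod.card]
      simp only [ne_eq]
      omega
    -- counting decomposition
    have hsum : A.card = ∑ x : Fin n → ZMod p,
        (Finset.univ.filter fun y : ZMod p => MvPolynomial.eval (Fin.cons y x) f ≠ 0).card := by
      rw [hA, Finset.card_filter]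
      rw [← Fintype.sum_equiv (Fin.consEquiv fun _ : Fin (n+1) => ZMod p)
        (fun z => if MvPolynomial.eval (Fin.cons z.1 z.2) f ≠ 0 then 1 else 0)
        (fun a => if MvPolynomial.eval a f ≠ 0 then 1 else 0) (fun z => rfl)]
      rw [Fintype.sum_prod_type_right]
      exact Finset.sum_congr rfl fun x _ => (Finset.card_filter _ _).symm
    have hAcard : S.card * (p - t) ≤ A.card := by
      rw [hsum]
      calc S.card * (p - t) = ∑ _x ∈ S, (p - t) := by rw [Finset.sum_const, smul_eq_mul]
        _ ≤ ∑ x ∈ S, (Finset.univ.filter fun y : ZMod p =>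
              MvPolynomial.eval (Fin.cons y x) f ≠ 0).card := Finset.sum_le_sum perx
        _ ≤ _ := Finset.sum_le_sum_of_subset (Finset.subset_univ S)
    -- real chain
    have hptR : ((p - t : ℕ) : ℝ) = (p:ℝ) - t := by
      rw [Nat.cast_sub (by omega)]
    have hAR : (S.card : ℝ) * ((p:ℝ) - t) ≤ A.card := by
      rw [← hptR, ← Nat.cast_mul]; exact_mod_cast hAcard
    have hqt0 : (0:ℝ) < (p:ℝ) - t := by linarith
    have hcast : (g.totalDegree:ℝ) + t ≤ (f.totalDegree:ℝ) := by exact_mod_cast hgt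
    have h1 : (p:ℝ) ^ (-(f.totalDegree:ℝ)/((p:ℝ)-1)) ≤
        (p:ℝ) ^ (-((g.totalDegree : ℝ) + t)/((p:ℝ)-1)) := by
      apply Real.rpow_le_rpow_of_exponent_le hq1.le
      have : -((f.totalDegree:ℝ)) ≤ -((g.totalDegree : ℝ) + t) := by linarith
      exact div_le_div_of_nonneg_right this hq1'.le
    have h2 : (p:ℝ) ^ (-((g.totalDegree : ℝ) + t)/((p:ℝ)-1))
        = (p:ℝ) ^ (-(g.totalDegree:ℝ)/((p:ℝ)-1)) * (p:ℝ) ^ (-(t:ℝ)/((p:ℝ)-1)) := by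
      rw [← Real.rpow_add hq0]; ring_nf
    have h3 := key_ineq p t hp2 ht
    calc (p:ℝ)^(n+1) * (p:ℝ) ^ (-(f.totalDegree:ℝ)/((p:ℝ)-1))
        ≤ (p:ℝ)^(n+1) * ((p:ℝ) ^ (-(g.totalDegree:ℝ)/((p:ℝ)-1)) * (p:ℝ) ^ (-(t:ℝ)/((p:ℝ)-1))) := by
          rw [← h2]; exact mul_le_mul_of_nonneg_left h1 (by positivity)
      _ ≤ (p:ℝ)^(n+1) * ((p:ℝ) ^ (-(g.totalDegree:ℝ)/((p:ℝ)-1)) * (((p:ℝ) - t)/p)) := by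
          gcongr
      _ = ((p:ℝ)^n * (p:ℝ) ^ (-(g.totalDegree:ℝ)/((p:ℝ)-1))) * ((p:ℝ) - t) := by
          rw [pow_succ]; field_simp
      _ ≤ (S.card : ℝ) * ((p:ℝ) - t) := mul_le_mul_of_nonneg_right IH hqt0.le
      _ ≤ A.card := hAR

/-- Schwartz–Zippel: a nonzero polynomial of total degree ≤ d with
individual degrees ≤ p-1 is nonzero on at least a `p^{-d/(p-1)}` fraction of points. -/
theorem schwartz_zippel (p n d : ℕ) (hp : p.Prime) [NeZero p]
    (f : MvPolynomial (Fin n) (ZMod p)) (hf : f ≠ 0)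
    (hdeg : f.totalDegree ≤ d) (hind : ∀ i, f.degreeOf i ≤ p - 1) :
    ({a : Fin n → ZMod p | MvPolynomial.eval a f ≠ 0}.ncard : ℝ) / (p : ℝ) ^ n
      ≥ (p : ℝ) ^ (-(d : ℝ) / ((p : ℝ) - 1)) := by
  have hp2 := hp.two_le
  have hq1 : (1:ℝ) < (p:ℝ) := by exact_mod_cast hp2
  have hq0 : (0:ℝ) < (p:ℝ) := by linarith
  have hq1' : (0:ℝ) < (p:ℝ) - 1 := by linarith
  have key := count_nonzero p hp n f hf hind
  have hset : ({a : Fin n → ZMod p | MvPolynomial.eval a f ≠ 0}.ncard)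
      = (Finset.univ.filter fun a : Fin n → ZMod p => MvPolynomial.eval a f ≠ 0).card := by
    rw [Set.ncard_eq_toFinset_card']
    congr 1
    ext a
    simp
  have hmono : (p:ℝ) ^ (-(d:ℝ)/((p:ℝ)-1)) ≤ (p:ℝ) ^ (-(f.totalDegree:ℝ)/((p:ℝ)-1)) := by
    apply Real.rpow_le_rpow_of_exponent_le hq1.le
    have hdr : (f.totalDegree:ℝ) ≤ (d:ℝ) := by exact_mod_cast hdeg
    exact div_le_div_of_nonneg_right (by linarith) hq1'.le
  rw [ge_iff_le, le_div_iff₀ (by positivity)]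
  calc (p:ℝ) ^ (-(d:ℝ)/((p:ℝ)-1)) * (p:ℝ)^n
      ≤ (p:ℝ)^n * (p:ℝ) ^ (-(f.totalDegree:ℝ)/((p:ℝ)-1)) := by
        rw [mul_comm]
        exact mul_le_mul_of_nonneg_left hmono (by positivity)
    _ ≤ ((Finset.univ.filter fun a : Fin n → ZMod p => MvPolynomial.eval a f ≠ 0).card : ℝ) := key
    _ = _ := by rw [hset]
end
end

section
/- Every nonzero function in the dual subspace (P^n_{(p-1)d})^⊥ = P^n_{(p-1)n-(p-1)d-1} has support size at least p^d. Consequently, for any set X of p^d - 1 points in F_p^n and any function f : X → F_p, there exists a polynomial q of degree at most (p-1)d (with individual degrees at most p-1) that agrees with f on all points of X. -/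
open scoped BigOperators

noncomputable section

/-!
Fewer than `p ^ d` points `T` can be separated from a point `a ∉ T` by `d` linear forms: for a
uniformly random `d × n` matrix `M`, each `y ≠ a` satisfies `M (y - a) = 0` with probability
`p ^ (-d)`, so a union bound produces `M` with `M y ≠ M a` for all `y ∈ T`. By Fermat,
`∏ⱼ (1 - (M (x - a))ⱼ ^ (p - 1))` is then a polynomial of total degree `(p - 1) d` equal to `1` at
`a` and vanishing on `T`, and reducing exponents via `x ^ p = x` does not raise the degree.
Pairing a dual function `β` with this polynomial, for `a` in the support of `β` and `T` the rest of
the support, gives `β a = 0` unless the support has at least `p ^ d` points; linear combinations of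
these indicators interpolate on any `p ^ d - 1` points.
-/

open Finset Matrix MvPolynomial

section Counting

variable {K ι σ : Type*} [Field K] [Fintype σ]

theorem Matrix.mulVec_addMonoidHomLeft_surjective {y : σ → K} (hy : y ≠ 0) :
    Function.Surjective (mulVec.addMonoidHomLeft (m := ι) y) := by
  classical
  obtain ⟨i, hi⟩ : ∃ i, y i ≠ 0 := Function.ne_iff.mp hy
  intro w
  refine ⟨vecMulVec w (Pi.single i (y i)⁻¹), ?_⟩
  change vecMulVec _ _ *ᵥ y = w
  simp [vecMulVec_mulVec, single_dotProduct, hi]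

variable [Fintype K] [Fintype ι]

theorem Matrix.card_mulVec_eq_zero_mul_pow [DecidableEq K] [DecidableEq ι] [DecidableEq σ]
    {y : σ → K} (hy : y ≠ 0) :
    #{M : Matrix ι σ K | M *ᵥ y = 0} * Fintype.card K ^ Fintype.card ι =
      Fintype.card K ^ (Fintype.card σ * Fintype.card ι) := by
  set f := mulVec.addMonoidHomLeft (m := ι) y
  have h := f.ker.card_mul_index
  rw [AddSubgroup.index_ker, AddMonoidHom.range_eq_top.mpr (mulVec_addMonoidHomLeft_surjective hy),
    Nat.card_congr AddSubgroup.topEquiv.toEquiv] at h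
  simp only [Nat.card_eq_fintype_card, Fintype.card_fun, Matrix, ← pow_mul] at h
  rw [← h, ← Fintype.card_subtype, ← Nat.card_eq_fintype_card]
  rfl

theorem Matrix.exists_forall_mulVec_ne_zero {T : Finset (σ → K)} (hT0 : 0 ∉ T)
    (hT : #T < Fintype.card K ^ Fintype.card ι) :
    ∃ M : Matrix ι σ K, ∀ y ∈ T, M *ᵥ y ≠ 0 := by
  classical
  set bad := T.biUnion fun y => ({M : Matrix ι σ K | M *ᵥ y = 0} : Finset _)
  have hbad : #bad < #(univ : Finset (Matrix ι σ K)) := by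
    refine Nat.lt_of_mul_lt_mul_right (a := Fintype.card K ^ Fintype.card ι) ?_
    calc #bad * Fintype.card K ^ Fintype.card ι
        ≤ ∑ y ∈ T, #{M : Matrix ι σ K | M *ᵥ y = 0} * Fintype.card K ^ Fintype.card ι := by
          rw [← sum_mul]; gcongr; exact card_biUnion_le
      _ = #T * Fintype.card K ^ (Fintype.card σ * Fintype.card ι) := by
          rw [sum_congr rfl fun y hy => card_mulVec_eq_zero_mul_pow (ne_of_mem_of_not_mem hy hT0),
            sum_const, smul_eq_mul]
      _ < Fintype.card K ^ Fintype.card ι * Fintype.card K ^ (Fintype.card σ * Fintype.card ι) := by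
          gcongr
      _ = #(univ : Finset (Matrix ι σ K)) * Fintype.card K ^ Fintype.card ι := by
          rw [card_univ, show Fintype.card (Matrix ι σ K) = Fintype.card (ι → σ → K) from rfl,
            Fintype.card_fun, Fintype.card_fun, ← pow_mul, mul_comm]
  obtain ⟨M, -, hM⟩ := exists_mem_notMem_of_card_lt_card hbad
  exact ⟨M, fun y hy h => hM (mem_biUnion.mpr ⟨y, hy, by simpa using h⟩)⟩

end Counting

section FiniteField

variable {K : Type*} [Field K] [Fintype K]

theorem FiniteField.exists_le_card_sub_one_pow_eq_pow (m : ℕ) :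
    ∃ r ≤ m, r ≤ Fintype.card K - 1 ∧ ∀ x : K, x ^ r = x ^ m := by
  induction m using Nat.strong_induction_on with
  | _ m ih =>
    by_cases hm : m ≤ Fintype.card K - 1
    · exact ⟨m, le_rfl, hm, fun _ => rfl⟩
    have hq := Fintype.one_lt_card (α := K)
    obtain ⟨r, hrm, hrq, hr⟩ := ih (m - (Fintype.card K - 1)) (by omega)
    refine ⟨r, by omega, hrq, fun x => ?_⟩
    calc x ^ r = x ^ (m - Fintype.card K) * x := by
          rw [hr, ← pow_succ]; congr 1; omega
      _ = x ^ (m - Fintype.card K) * x ^ Fintype.card K := by rw [FiniteField.pow_card]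
      _ = x ^ m := by rw [← pow_add]; congr 1; omega

variable {σ : Type*} [Fintype σ]

namespace MvPolynomial

theorem exists_degreeOf_le_eval_eq (P : MvPolynomial σ K) :
    ∃ Q : MvPolynomial σ K, Q.totalDegree ≤ P.totalDegree ∧
      (∀ i, Q.degreeOf i ≤ Fintype.card K - 1) ∧ ∀ x, eval x Q = eval x P := by
  classical
  choose r hrm hrq hr using FiniteField.exists_le_card_sub_one_pow_eq_pow (K := K)
  have hr0 : r 0 = 0 := Nat.le_zero.mp (hrm 0)
  set red : (σ →₀ ℕ) → σ →₀ ℕ := Finsupp.mapRange r hr0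
  refine ⟨∑ a ∈ P.support, monomial (red a) (P.coeff a), ?_, fun i => ?_, fun x => ?_⟩
  · refine totalDegree_finsetSum_le fun a ha => (totalDegree_monomial_le _ _).trans ?_
    refine le_trans ?_ (le_totalDegree ha)
    rw [Finsupp.sum_mapRange_index fun _ => rfl]
    exact sum_le_sum fun i _ => hrm (a i)
  · refine (degreeOf_sum_le _ _ _).trans <| Finset.sup_le fun a _ =>
      degreeOf_le_iff.mpr fun m hm => ?_
    rw [mem_singleton.mp (support_monomial_subset hm)]
    exact hrq (a i)
  · rw [eval_eq' x P, map_sum]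
    refine sum_congr rfl fun a _ => ?_
    simp only [eval_monomial, Finsupp.prod_pow, red, Finsupp.mapRange_apply, hr]

variable {ι : Type*} [Fintype ι]

def fiberIndicator (M : Matrix ι σ K) (a : σ → K) : MvPolynomial σ K :=
  ∏ j, (1 - (∑ i, C (M j i) * (X i - C (a i))) ^ (Fintype.card K - 1))

theorem eval_fiberIndicator (M : Matrix ι σ K) (a x : σ → K) :
    eval x (fiberIndicator M a) = ∏ j, (1 - (M *ᵥ (x - a)) j ^ (Fintype.card K - 1)) := by
  simp only [fiberIndicator, map_prod, map_sub, map_one, map_pow, map_sum, map_mul, eval_C, eval_X]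
  rfl

theorem eval_fiberIndicator_self (M : Matrix ι σ K) (a : σ → K) :
    eval a (fiberIndicator M a) = 1 := by
  have hq : Fintype.card K - 1 ≠ 0 := by have := Fintype.one_lt_card (α := K); omega
  simp [eval_fiberIndicator, hq]

theorem eval_fiberIndicator_eq_zero {M : Matrix ι σ K} {a x : σ → K} (h : M *ᵥ (x - a) ≠ 0) :
    eval x (fiberIndicator M a) = 0 := by
  obtain ⟨j, hj⟩ := Function.ne_iff.mp h
  rw [eval_fiberIndicator]
  exact prod_eq_zero (mem_univ j) (by rw [FiniteField.pow_card_sub_one_eq_one _ hj, sub_self])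

theorem totalDegree_fiberIndicator_le (M : Matrix ι σ K) (a : σ → K) :
    (fiberIndicator M a).totalDegree ≤ (Fintype.card K - 1) * Fintype.card ι := by
  have hlin (j : ι) : (∑ i, C (M j i) * (X i - C (a i)) : MvPolynomial σ K).totalDegree ≤ 1 :=
    totalDegree_finsetSum_le fun i _ => (totalDegree_mul _ _).trans <| by
      rw [totalDegree_C, zero_add]
      exact (totalDegree_sub _ _).trans (by simp [totalDegree_X])
  have hfactor (j : ι) :
      (1 - (∑ i, C (M j i) * (X i - C (a i))) ^ (Fintype.card K - 1)).totalDegree ≤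
        Fintype.card K - 1 :=
    (totalDegree_sub _ _).trans <| max_le (by simp) <|
      (totalDegree_pow _ _).trans (by simpa using Nat.mul_le_mul_left _ (hlin j))
  exact (totalDegree_finsetProd _ _).trans
    ((sum_le_sum fun j _ => hfactor j).trans_eq (by simp [mul_comm]))

theorem exists_totalDegree_le_eval_eq_one_of_card_lt (d : ℕ) {a : σ → K} {T : Finset (σ → K)}
    (ha : a ∉ T) (hT : #T < Fintype.card K ^ d) :
    ∃ P : MvPolynomial σ K, P.totalDegree ≤ (Fintype.card K - 1) * d ∧
      eval a P = 1 ∧ ∀ y ∈ T, eval y P = 0 := by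
  classical
  have h0 : (0 : σ → K) ∉ T.image (· - a) := by simpa [sub_eq_zero] using ha
  obtain ⟨M, hM⟩ := exists_forall_mulVec_ne_zero (ι := Fin d) h0
    (card_image_le.trans_lt (by simpa using hT))
  exact ⟨fiberIndicator M a, by simpa using totalDegree_fiberIndicator_le M a,
    eval_fiberIndicator_self M a,
    fun y hy => eval_fiberIndicator_eq_zero (hM _ (mem_image_of_mem _ hy))⟩

end MvPolynomial

end FiniteField

section PolyFns

variable {p : ℕ} [Fact p.Prime]

theorem polyFns_eq_map_restrictTotalDegree (n k : ℕ) :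
    PolyFns p n k = ((restrictTotalDegree (Fin n) (ZMod p) k).map (evalₗ (ZMod p) (Fin n)) :
      Set ((Fin n → ZMod p) → ZMod p)) := by
  ext f
  simp only [PolyFns, Set.mem_ofPred_eq, Submodule.map_coe, Set.mem_image, SetLike.mem_coe,
    mem_restrictTotalDegree, funext_iff, evalₗ_apply]
  constructor
  · rintro ⟨P, hP, -, hPf⟩
    exact ⟨P, hP, hPf⟩
  · rintro ⟨P, hP, hPf⟩
    obtain ⟨Q, hQ, hQdeg, hQP⟩ := exists_degreeOf_le_eval_eq P
    exact ⟨Q, hQ.trans hP, by simpa using hQdeg, fun x => (hQP x).trans (hPf x)⟩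

theorem exists_mem_polyFns_indicator {n d : ℕ} {a : Fin n → ZMod p} {T : Finset (Fin n → ZMod p)}
    (ha : a ∉ T) (hT : #T < p ^ d) :
    ∃ δ ∈ PolyFns p n ((p - 1) * d), δ a = 1 ∧ ∀ y ∈ T, δ y = 0 := by
  obtain ⟨P, hP, hPa, hPT⟩ :=
    exists_totalDegree_le_eval_eq_one_of_card_lt d ha (by rwa [ZMod.card])
  rw [ZMod.card] at hP
  rw [polyFns_eq_map_restrictTotalDegree]
  exact ⟨_, ⟨P, (mem_restrictTotalDegree _ _ _).mpr hP, rfl⟩, hPa, hPT⟩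

theorem le_ncard_support_of_mem_dualSet {n d : ℕ} {β : (Fin n → ZMod p) → ZMod p}
    (hβ : β ∈ dualSet (PolyFns p n ((p - 1) * d))) (hβ0 : β ≠ 0) :
    p ^ d ≤ {x | β x ≠ 0}.ncard := by
  classical
  obtain ⟨a, ha⟩ := Function.ne_iff.mp hβ0
  set S : Finset (Fin n → ZMod p) := {x | β x ≠ 0}
  have hS : {x | β x ≠ 0}.ncard = #S := by rw [← Set.ncard_coe_finset]; simp [S]
  by_contra! hlt
  obtain ⟨δ, hδ, hδa, hδS⟩ := exists_mem_polyFns_indicator (notMem_erase a S)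
    (card_erase_le.trans_lt (hS ▸ hlt))
  have hdot : dotF β δ = β a := by
    refine (sum_eq_single a (fun x _ hxa => ?_) (by simp)).trans (by rw [hδa, mul_one])
    by_cases hx : β x = 0
    · rw [hx, zero_mul]
    · rw [hδS x (mem_erase.mpr ⟨hxa, by simpa [S] using hx⟩), mul_zero]
  exact ha (hdot ▸ hβ δ hδ)

theorem exists_mem_polyFns_eqOn {n d : ℕ} {X : Finset (Fin n → ZMod p)} (hX : #X < p ^ d)
    (f : (Fin n → ZMod p) → ZMod p) :
    ∃ q ∈ PolyFns p n ((p - 1) * d), ∀ x ∈ X, q x = f x := by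
  classical
  have hind (a : Fin n → ZMod p) :
      ∃ δ ∈ PolyFns p n ((p - 1) * d), δ a = 1 ∧ ∀ y ∈ X.erase a, δ y = 0 :=
    exists_mem_polyFns_indicator (notMem_erase a X) (card_erase_le.trans_lt hX)
  choose δ hδ hδa hδX using hind
  refine ⟨∑ a ∈ X, f a • δ a, ?_, fun x hx => ?_⟩
  · rw [polyFns_eq_map_restrictTotalDegree] at hδ ⊢
    exact Submodule.sum_mem _ fun a _ => Submodule.smul_mem _ _ (hδ a)
  · rw [Finset.sum_apply, sum_eq_single x (fun a _ hax => ?_) (fun h => absurd hx h)]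
    · simp [hδa]
    · simp [hδX a x (mem_erase.mpr ⟨Ne.symm hax, hx⟩)]

end PolyFns

theorem min_support_and_interpolation_general (p n d : ℕ) (hp : p.Prime) [NeZero p] :
    (∀ β ∈ dualSet (PolyFns p n ((p - 1) * d)), β ≠ 0 → p ^ d ≤ {x | β x ≠ 0}.ncard) ∧
    (∀ X : Finset (Fin n → ZMod p), X.card = p ^ d - 1 →
      ∀ f : (Fin n → ZMod p) → ZMod p,
        ∃ q ∈ PolyFns p n ((p - 1) * d), ∀ x ∈ X, q x = f x) := by
  have : Fact p.Prime := ⟨hp⟩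
  refine ⟨fun β hβ hβ0 => le_ncard_support_of_mem_dualSet hβ hβ0, fun X hX f => ?_⟩
  exact exists_mem_polyFns_eqOn (hX ▸ Nat.sub_one_lt (pow_ne_zero d hp.ne_zero)) f

/-- Every nonzero function in `(P^n_{(p-1)d})^⊥` has support size at least `p^d`;
consequently one can interpolate any function on `p^d - 1` points by a degree-`(p-1)d`
polynomial. -/
theorem min_support_and_interpolation (p n d : ℕ) (hp : p.Prime) [NeZero p]
    (hd : 1 < d) (hdn : d ≤ n) :
    (∀ β ∈ dualSet (PolyFns p n ((p - 1) * d)), β ≠ 0 → p ^ d ≤ {x | β x ≠ 0}.ncard) ∧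
    (∀ X : Finset (Fin n → ZMod p), X.card = p ^ d - 1 →
      ∀ f : (Fin n → ZMod p) → ZMod p,
        ∃ q ∈ PolyFns p n ((p - 1) * d), ∀ x ∈ X, q x = f x) :=
  min_support_and_interpolation_general p n d hp
end
end

section
/- Folding kills bad Fourier coefficients: let q_1,…,q_k ∈ P^n_{3(p-1)} and J := {Σ_i r_i q_i : r_i ∈ P^n_{(p-1)(d-3)}} ⊆ P^n_{(p-1)d}. Suppose β : F_p^n → F_p has |supp(β)| < p^{d-3} and there exists x ∈ supp(β) with q_i(x) ≠ 0 for some i. If A : P^n_{(p-1)d} → ℂ is constant on cosets of J, then the Fourier coefficient Â(β) = E_{h ∈ P^n_{(p-1)d}}[A(h)·conj(χ_β(h))] equals 0. -/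
open scoped BigOperators

noncomputable section

/-! Choose a point `x₀` of `supp β` with `q i₀ x₀ ≠ 0`. A random linear map `F_p^n → F_p^(d-3)`
separates `x₀` from the fewer than `p^(d-3)` other points of `supp β`, and the indicator of its
fibre through `x₀` is a polynomial `r` of degree `(p-1)(d-3)`. Then `j = r q_{i₀} ∈ J`, and
`⟨β, j⟩ = β(x₀) q_{i₀}(x₀) ≠ 0`. Translating the sum defining `Â(β)` by `j` leaves it unchanged
(as `A` is folded over `J`) but multiplies it by the nontrivial root of unity `ω^{-⟨β, j⟩}`, so it
vanishes. -/

open MvPolynomial Matrix Finset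

theorem ZMod.exists_pow_eq_pow_of_le_sub_one {p : ℕ} [Fact p.Prime] (e : ℕ) :
    ∃ e' ≤ e, e' ≤ p - 1 ∧ ∀ x : ZMod p, x ^ e' = x ^ e := by
  induction e using Nat.strong_induction_on with
  | _ e ih =>
    have hp := (Fact.out : p.Prime).one_lt
    by_cases he : e ≤ p - 1
    · exact ⟨e, le_rfl, he, fun _ => rfl⟩
    obtain ⟨e', hle, hlt, hpow⟩ := ih (e - (p - 1)) (by omega)
    refine ⟨e', by omega, hlt, fun x => ?_⟩
    calc x ^ e' = x ^ (e - p) * x := by rw [hpow, ← pow_succ]; congr 1; omega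
      _ = x ^ (e - p) * x ^ p := by rw [ZMod.pow_card]
      _ = x ^ e := by rw [← pow_add]; congr 1; omega

theorem MvPolynomial.exists_degreeOf_le_sub_one_eval_eq {p : ℕ} [Fact p.Prime] {σ : Type*}
    (P : MvPolynomial σ (ZMod p)) :
    ∃ Q : MvPolynomial σ (ZMod p), Q.totalDegree ≤ P.totalDegree ∧
      (∀ i, Q.degreeOf i ≤ p - 1) ∧ ∀ x, eval x Q = eval x P := by
  classical
  choose red hred_le hred_lt hred_pow using ZMod.exists_pow_eq_pow_of_le_sub_one (p := p)
  have hred0 : red 0 = 0 := Nat.le_zero.mp (hred_le 0)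
  refine ⟨∑ s ∈ P.support, monomial (s.mapRange red hred0) (P.coeff s), ?_, fun i => ?_,
    fun x => ?_⟩
  · refine (totalDegree_finsetSum _ _).trans (Finset.sup_le fun s hs => ?_)
    refine (totalDegree_monomial_le _ _).trans (le_trans ?_ (le_totalDegree hs))
    rw [Finsupp.sum_mapRange_index fun _ => rfl]
    exact sum_le_sum fun i _ => hred_le (s i)
  · rw [degreeOf_le_iff]
    intro t ht
    obtain ⟨s, -, hts⟩ := mem_biUnion.mp (support_sum ht)
    rw [mem_singleton.mp (support_monomial_subset hts)]
    exact hred_lt (s i)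
  · conv_rhs => rw [← support_sum_monomial_coeff P]
    simp only [map_sum, eval_monomial]
    refine sum_congr rfl fun s _ => ?_
    rw [Finsupp.prod_mapRange_index fun _ => pow_zero _]
    simp only [hred_pow]

theorem Matrix.card_filter_mulVec_eq_zero_mul {F ι : Type*} [Field F] [Fintype F] [DecidableEq F]
    [Fintype ι] [DecidableEq ι] (m : ℕ) {v : ι → F} (hv : v ≠ 0) :
    #{M : Matrix (Fin m) ι F | M *ᵥ v = 0} * Fintype.card F ^ m =
      Fintype.card (Matrix (Fin m) ι F) := by
  let φ : Matrix (Fin m) ι F →+ (Fin m → F) :=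
    AddMonoidHom.mk' (· *ᵥ v) fun M N => add_mulVec M N v
  obtain ⟨i₀, hi₀⟩ := Function.ne_iff.mp hv
  have hφ : Function.Surjective φ := fun w =>
    ⟨vecMulVec w (Pi.single i₀ (v i₀)⁻¹), by
      simp [φ, vecMulVec_mulVec, single_dotProduct, inv_mul_cancel₀ hi₀]⟩
  have := φ.ker.card_mul_index
  rw [AddSubgroup.index_ker, AddMonoidHom.range_eq_top.mpr hφ, AddSubgroup.card_top] at this
  simpa [Nat.card_eq_fintype_card, Fintype.card_subtype, φ] using this

theorem Matrix.exists_mulVec_ne_of_card_lt {F ι : Type*} [Field F] [Fintype F] [DecidableEq F]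
    [Fintype ι] [DecidableEq ι] {m : ℕ} {T : Finset (ι → F)} (hT : #T < Fintype.card F ^ m)
    {x₀ : ι → F} (hx₀ : x₀ ∉ T) : ∃ M : Matrix (Fin m) ι F, ∀ y ∈ T, M *ᵥ y ≠ M *ᵥ x₀ := by
  by_contra! h
  let bad (y : ι → F) := ({M : Matrix (Fin m) ι F | M *ᵥ (y - x₀) = 0} : Finset _)
  have hcover : (univ : Finset (Matrix (Fin m) ι F)) ⊆ T.biUnion bad := fun M _ => by
    obtain ⟨y, hy, hMy⟩ := h M
    exact mem_biUnion.mpr ⟨y, hy, by simp [bad, mulVec_sub, hMy]⟩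
  have hbad : ∀ y ∈ T, #(bad y) * Fintype.card F ^ m = Fintype.card (Matrix (Fin m) ι F) :=
    fun y hy => card_filter_mulVec_eq_zero_mul m (sub_ne_zero.mpr (ne_of_mem_of_not_mem hy hx₀))
  have hpos : 0 < Fintype.card (Matrix (Fin m) ι F) := Fintype.card_pos
  have := calc Fintype.card (Matrix (Fin m) ι F) * Fintype.card F ^ m
      ≤ (∑ y ∈ T, #(bad y)) * Fintype.card F ^ m :=
        Nat.mul_le_mul_right _ ((card_le_card hcover).trans card_biUnion_le)
    _ = #T * Fintype.card (Matrix (Fin m) ι F) := by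
        rw [sum_mul, sum_congr rfl hbad, sum_const, smul_eq_mul]
  linarith [Nat.mul_lt_mul_of_pos_right hT hpos]

namespace PolyFns

variable {p n D D' : ℕ} {f g : (Fin n → ZMod p) → ZMod p}

theorem mono (h : D ≤ D') : PolyFns p n D ⊆ PolyFns p n D' :=
  fun _ ⟨P, hdeg, hind, heval⟩ => ⟨P, hdeg.trans h, hind, heval⟩

theorem zero_mem : (0 : (Fin n → ZMod p) → ZMod p) ∈ PolyFns p n D :=
  ⟨0, by simp, by simp, by simp⟩

variable [Fact p.Prime]

theorem mem_iff : f ∈ PolyFns p n D ↔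
    ∃ P : MvPolynomial (Fin n) (ZMod p), P.totalDegree ≤ D ∧ ∀ x, eval x P = f x := by
  refine ⟨fun ⟨P, hdeg, _, heval⟩ => ⟨P, hdeg, heval⟩, fun ⟨P, hdeg, heval⟩ => ?_⟩
  obtain ⟨Q, hQdeg, hQind, hQeval⟩ := P.exists_degreeOf_le_sub_one_eval_eq
  exact ⟨Q, hQdeg.trans hdeg, hQind, fun x => (hQeval x).trans (heval x)⟩

theorem add_mem (hf : f ∈ PolyFns p n D) (hg : g ∈ PolyFns p n D) : f + g ∈ PolyFns p n D := by
  obtain ⟨P, hP, hPf⟩ := mem_iff.mp hf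
  obtain ⟨Q, hQ, hQg⟩ := mem_iff.mp hg
  exact mem_iff.mpr ⟨P + Q, (totalDegree_add P Q).trans (max_le hP hQ), by simp [hPf, hQg]⟩

theorem neg_mem (hf : f ∈ PolyFns p n D) : -f ∈ PolyFns p n D := by
  obtain ⟨P, hP, hPf⟩ := mem_iff.mp hf
  exact mem_iff.mpr ⟨-P, (totalDegree_neg P).trans_le hP, by simp [hPf]⟩

theorem mul_mem (hf : f ∈ PolyFns p n D) (hg : g ∈ PolyFns p n D') :
    f * g ∈ PolyFns p n (D + D') := by
  obtain ⟨P, hP, hPf⟩ := mem_iff.mp hf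
  obtain ⟨Q, hQ, hQg⟩ := mem_iff.mp hg
  exact mem_iff.mpr ⟨P * Q, (totalDegree_mul P Q).trans (add_le_add hP hQ), by simp [hPf, hQg]⟩

theorem add_mem_iff_left (hg : g ∈ PolyFns p n D) :
    f + g ∈ PolyFns p n D ↔ f ∈ PolyFns p n D :=
  ⟨fun h => by simpa using add_mem h (neg_mem hg), fun hf => add_mem hf hg⟩

theorem exists_separating {m : ℕ} {T : Finset (Fin n → ZMod p)} (hT : #T < p ^ m)
    {x₀ : Fin n → ZMod p} (hx₀ : x₀ ∉ T) :
    ∃ r ∈ PolyFns p n ((p - 1) * m), r x₀ = 1 ∧ ∀ y ∈ T, r y = 0 := by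
  obtain ⟨M, hM⟩ := exists_mulVec_ne_of_card_lt (by rwa [ZMod.card]) hx₀
  have hp := (Fact.out : p.Prime).one_lt
  -- the indicator of the fibre of `M` through `x₀`, as `a ^ (p - 1) = 1` for `a ≠ 0`
  refine ⟨fun x => ∏ j, (1 - ((M *ᵥ x) j - (M *ᵥ x₀) j) ^ (p - 1)), ?_, ?_, fun y hy => ?_⟩
  · let L (j : Fin m) : MvPolynomial (Fin n) (ZMod p) := ∑ i, M j i • X i - C ((M *ᵥ x₀) j)
    have hL (j : Fin m) : (L j).totalDegree ≤ 1 :=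
      (totalDegree_sub_C_le _ _).trans <| (totalDegree_finsetSum _ _).trans <|
        Finset.sup_le fun i _ => (totalDegree_smul_le _ _).trans (totalDegree_X i).le
    refine mem_iff.mpr ⟨∏ j, (1 - L j ^ (p - 1)), ?_, fun x => by simp [L, mulVec, dotProduct]⟩
    calc _ ≤ ∑ j, (1 - L j ^ (p - 1)).totalDegree := totalDegree_finsetProd _ _
      _ ≤ ∑ _j : Fin m, (p - 1) := sum_le_sum fun j _ => by
        refine (totalDegree_sub _ _).trans (max_le (by simp) ?_)
        exact (totalDegree_pow _ _).trans (by simpa using Nat.mul_le_mul_left (p - 1) (hL j))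
      _ = (p - 1) * m := by simp [mul_comm]
  · simp [zero_pow (Nat.sub_ne_zero_of_lt hp)]
  · obtain ⟨j, hj⟩ := Function.ne_iff.mp (hM y hy)
    refine prod_eq_zero (mem_univ j) ?_
    rw [ZMod.pow_card_sub_one_eq_one (sub_ne_zero.mpr hj), sub_self]

end PolyFns

theorem apply_add_mul_eq_of_forall_add_sum_mul {ι M X : Type*} [Fintype ι] [DecidableEq ι]
    [NonUnitalNonAssocSemiring M] {G S : Set M} (hS : 0 ∈ S) {q : ι → M} {A : M → X}
    (hA : ∀ g ∈ G, ∀ r : ι → M, (∀ i, r i ∈ S) → A (g + ∑ i, r i * q i) = A g)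
    {r : M} (hr : r ∈ S) (i₀ : ι) {g : M} (hg : g ∈ G) : A (g + r * q i₀) = A g := by
  have hsingle : ∀ i, (Pi.single i₀ r : ι → M) i ∈ S := fun i => by
    rcases eq_or_ne i i₀ with rfl | hi
    · simpa using hr
    · simpa [hi] using hS
  simpa only [← Pi.single_mul_left_apply, Fintype.sum_pi_single'] using
    hA g hg (Pi.single i₀ r) hsingle

theorem pow_val_add_of_pow_eq_one {p : ℕ} [NeZero p] {M : Type*} [CommMonoid M] {ω : M}
    (hω : ω ^ p = 1) (a b : ZMod p) : ω ^ (a + b).val = ω ^ a.val * ω ^ b.val := by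
  simpa only [AddChar.zmodChar_apply] using (AddChar.zmodChar p hω).map_add_eq_mul a b

theorem Finset.sum_eq_zero_of_add_right_eq_mul {G R : Type*} [AddGroup G] [Ring R]
    [NoZeroDivisors R] {S : Finset G} {f : G → R} {j : G} {c : R}
    (hS : ∀ g, g + j ∈ S ↔ g ∈ S) (hf : ∀ g ∈ S, f (g + j) = c * f g) (hc : c ≠ 1) :
    ∑ g ∈ S, f g = 0 := by
  have hshift : ∑ g ∈ S, f (g + j) = ∑ g ∈ S, f g :=
    sum_equiv (Equiv.addRight j) (fun g => (hS g).symm) fun _ _ => rfl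
  rw [sum_congr rfl hf, ← mul_sum] at hshift
  have := mul_eq_zero.mp (by rw [sub_mul, one_mul, hshift, sub_self] : (c - 1) * _ = 0)
  exact this.resolve_left (sub_ne_zero.mpr hc)

theorem dotF_add_right {p n : ℕ} [NeZero p] (f g h : (Fin n → ZMod p) → ZMod p) :
    dotF f (g + h) = dotF f g + dotF f h := by
  simp only [dotF, Pi.add_apply, mul_add, sum_add_distrib]

theorem dotF_eq_single {p n : ℕ} [NeZero p] {f g : (Fin n → ZMod p) → ZMod p}
    {x₀ : Fin n → ZMod p} (h : ∀ x ≠ x₀, f x * g x = 0) : dotF f g = f x₀ * g x₀ :=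
  sum_eq_single x₀ (fun x _ hx => h x hx) (by simp)

/-- Folding kills bad Fourier coefficients: if `A` is folded over
`J = {Σ r_i q_i : r_i ∈ P^n_{(p-1)(d-3)}}` and `β` has small support containing a point
where some `q_i` is nonzero, then `Â(β) = 0`. -/
theorem folding_kills_bad_coefficients (p n d k : ℕ) (hp : p.Prime) [NeZero p]
    (hd : 3 < d)
    (ω : ℂ) (hω : IsPrimitiveRoot ω p)
    (q : Fin k → ((Fin n → ZMod p) → ZMod p))
    (hq : ∀ i, q i ∈ PolyFns p n (3 * (p - 1)))
    (β : (Fin n → ZMod p) → ZMod p)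
    (hsupp : {x | β x ≠ 0}.ncard < p ^ (d - 3))
    (hx : ∃ x, β x ≠ 0 ∧ ∃ i, q i x ≠ 0)
    (A : ((Fin n → ZMod p) → ZMod p) → ℂ)
    (hfold : ∀ g ∈ PolyFns p n ((p - 1) * d),
      ∀ r : Fin k → ((Fin n → ZMod p) → ZMod p),
        (∀ i, r i ∈ PolyFns p n ((p - 1) * (d - 3))) →
        A (g + ∑ i, r i * q i) = A g) :
    (∑ g ∈ (Set.toFinite (PolyFns p n ((p - 1) * d))).toFinset,
        A g * (starRingEnd ℂ) (ω ^ (dotF β g).val))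
      / ((Set.toFinite (PolyFns p n ((p - 1) * d))).toFinset.card : ℂ) = 0 := by
  have : Fact p.Prime := ⟨hp⟩
  obtain ⟨x₀, hβx₀, i₀, hqx₀⟩ := hx
  obtain ⟨r, hr, hrx₀, hrT⟩ := PolyFns.exists_separating (m := d - 3)
    (T := {x | β x ≠ 0}.toFinset.erase x₀)
    (card_erase_le.trans_lt (by rwa [← Set.ncard_eq_toFinset_card'])) (notMem_erase x₀ _)
  have hj : r * q i₀ ∈ PolyFns p n ((p - 1) * d) :=
    PolyFns.mono (by rw [mul_comm 3, ← mul_add, Nat.sub_add_cancel hd.le])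
      (PolyFns.mul_mem hr (hq i₀))
  have hβj : dotF β (r * q i₀) = β x₀ * q i₀ x₀ := by
    rw [dotF_eq_single fun x hx => ?_, Pi.mul_apply, hrx₀, one_mul]
    by_cases hβx : β x = 0
    · rw [hβx, zero_mul]
    · rw [Pi.mul_apply, hrT x (by simp [hx, hβx]), zero_mul, mul_zero]
  have hc : starRingEnd ℂ (ω ^ (β x₀ * q i₀ x₀).val) ≠ 1 := by
    rw [Ne, map_eq_one_iff _ (starRingEnd ℂ).injective]
    exact hω.pow_ne_one_of_pos_of_lt ((ZMod.val_ne_zero _).mpr (mul_ne_zero hβx₀ hqx₀))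
      (ZMod.val_lt _)
  refine div_eq_zero_iff.mpr <| Or.inl <| sum_eq_zero_of_add_right_eq_mul (j := r * q i₀)
    (fun g => by simpa using PolyFns.add_mem_iff_left hj) (fun g hg => ?_) hc
  rw [Set.Finite.mem_toFinset] at hg
  rw [apply_add_mul_eq_of_forall_add_sum_mul PolyFns.zero_mem hfold hr i₀ hg, dotF_add_right,
    hβj, pow_val_add_of_pow_eq_one hω.pow_eq_one, map_mul]
  ring
end
end

section
/- Rank equals distance in the small-distance regime: over F_3, suppose β : F_3^n → F_3 has support of size Δ where Δ equals the Hamming distance of β from P^n_{2n-2d-1} (i.e., β is a minimum-support representative of its coset) and Δ < 3^{d/2}. Then the matrix Q^β := Σ_x β(x)·e_x e_x^T has rank exactly Δ. -/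
open scoped BigOperators

noncomputable section

/-- Exponent vectors of monomials over `F_3` (individual degrees ≤ 2) of total degree ≤ d. -/
abbrev MonIdx (n d : ℕ) := {a : Fin n → Fin 3 // ∑ i, (a i : ℕ) ≤ d}

/-- The evaluation vector `e_x` of all monomials of degree ≤ d at the point `x`. -/
def evalVec {n d : ℕ} (x : Fin n → ZMod 3) : MonIdx n d → ZMod 3 :=
  fun a => ∏ i, (x i) ^ ((a.1 i : ℕ))

/-- The matrix `Q^β = Σ_x β(x)·e_x e_x^T`, indexed by monomials of degree ≤ d. -/
def Qmat (n d : ℕ) (β : (Fin n → ZMod 3) → ZMod 3) :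
    Matrix (MonIdx n d) (MonIdx n d) (ZMod 3) :=
  fun a b => ∑ x : Fin n → ZMod 3, β x * (evalVec x a * evalVec x b)

/-! A nonzero `c : 𝔽₃ⁿ → 𝔽₃` orthogonal to all polynomials of degree `≤ d` has support of size
at least `3^{d/2}`. Induct on `d`, slicing the support along a coordinate `x i` on which it is not
constant: `1 - (x i - t)²` cuts out one slice at the cost of two degrees, and when some slice is
empty the linear `x i - s` cuts out each of the other two at the cost of one degree; either way
the slices sum to at least `3 · 3^{(d-2)/2}`.

Consequently the vectors `e_x`, `x ∈ supp β`, are linearly independent, since a vanishing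
combination of them is such a function. So the evaluation matrix `E` with these rows has full
row rank, and `Q^β = Eᵀ diag(β) E` has rank `|supp β| = Δ`. -/

section Annihilation

open Finset MvPolynomial

variable {σ R : Type*}

theorem MvPolynomial.totalDegree_X_sub_C_le [CommRing R] [Nontrivial R] (i : σ) (a : R) :
    (X i - C a : MvPolynomial σ R).totalDegree ≤ 1 :=
  (totalDegree_sub _ _).trans (by simp)

def coordSlice [Zero R] [DecidableEq R] (c : (σ → R) → R) (i : σ) (t : R) (x : σ → R) : R :=
  if x i = t then c x else 0

theorem coordSlice_ne_zero [Zero R] [DecidableEq R] {c : (σ → R) → R} {x : σ → R}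
    (hx : c x ≠ 0) (i : σ) : coordSlice c i (x i) ≠ 0 :=
  Function.ne_iff.mpr ⟨x, by simpa [coordSlice] using hx⟩

variable [Fintype σ] [DecidableEq σ]

theorem card_support_eq_sum_card_support_coordSlice [Zero R] [Fintype R] [DecidableEq R]
    (c : (σ → R) → R) (i : σ) :
    #{x | c x ≠ 0} = ∑ t, #{x | coordSlice c i t x ≠ 0} := by
  rw [card_eq_sum_card_fiberwise (f := fun x => x i) (t := univ) fun _ _ => mem_univ _]
  refine sum_congr rfl fun t _ => congrArg card ?_
  ext x
  by_cases hx : x i = t <;> simp [coordSlice, hx]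

def AnnihilatesPolys [CommRing R] [Fintype R] (c : (σ → R) → R) (d : ℕ) : Prop :=
  ∀ P : MvPolynomial σ R, P.totalDegree ≤ d → ∑ x, c x * eval x P = 0

namespace AnnihilatesPolys

variable [CommRing R] [Fintype R] {c : (σ → R) → R}

theorem mul_eval {k d : ℕ} (h : AnnihilatesPolys c (k + d)) {Q : MvPolynomial σ R}
    (hQ : Q.totalDegree ≤ k) : AnnihilatesPolys (fun x => c x * eval x Q) d := by
  intro P hP
  simp_rw [mul_assoc, ← eval_mul]
  exact h _ ((totalDegree_mul Q P).trans (add_le_add hQ hP))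

theorem coordSlice_of_eval_eq [DecidableEq R] {k d : ℕ} (h : AnnihilatesPolys c (k + d))
    {Q : MvPolynomial σ R} (hQ : Q.totalDegree ≤ k) {i : σ} {t : R}
    (hQt : ∀ x, c x ≠ 0 → eval x Q = if x i = t then 1 else 0) :
    AnnihilatesPolys (coordSlice c i t) d := by
  convert h.mul_eval hQ using 2 with x
  by_cases hx : c x = 0
  · simp [coordSlice, hx]
  · simp [coordSlice, hQt x hx]

theorem two_le_card_support [DecidableEq R] {d : ℕ} (h : AnnihilatesPolys c d) (hc : c ≠ 0) :
    2 ≤ #{x | c x ≠ 0} := by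
  have hsum : ∑ x, c x = 0 := by simpa using h 1 (by simp)
  obtain ⟨u, hu⟩ := Function.ne_iff.mp hc
  have hu' : u ∈ ({x | c x ≠ 0} : Finset _) := by simpa using hu
  by_contra! hlt
  have hsupp : ({x | c x ≠ 0} : Finset _) = {u} :=
    eq_singleton_iff_unique_mem.mpr ⟨hu', fun y hy => card_le_one.mp (by omega) y hy u hu'⟩
  rw [← sum_filter_ne_zero, hsupp, sum_singleton] at hsum
  exact hu hsum

variable {c : (σ → ZMod 3) → ZMod 3} {d : ℕ}

theorem coordSlice_zmod_three (h : AnnihilatesPolys c (2 + d)) (i : σ) (t : ZMod 3) :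
    AnnihilatesPolys (coordSlice c i t) d := by
  refine h.coordSlice_of_eval_eq (Q := 1 - (X i - C t) ^ 2) ?_ fun x _ => ?_
  · refine (totalDegree_sub _ _).trans (max_le (by simp) ?_)
    exact (totalDegree_pow _ _).trans (by linarith [totalDegree_X_sub_C_le i t])
  · have key : ∀ a t : ZMod 3, 1 - (a - t) ^ 2 = if a = t then 1 else 0 := by decide
    simpa using key (x i) t

theorem coordSlice_of_coordSlice_eq_zero (h : AnnihilatesPolys c (1 + d))
    {i : σ} {r s t : ZMod 3} (hr : coordSlice c i r = 0) (hts : t ≠ s) (hrt : r ≠ t)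
    (hrs : r ≠ s) : AnnihilatesPolys (coordSlice c i t) d := by
  refine h.coordSlice_of_eval_eq (Q := C (t - s) * (X i - C s)) ?_ fun x hx => ?_
  · refine (totalDegree_mul _ _).trans ?_
    rw [totalDegree_C, zero_add]
    exact totalDegree_X_sub_C_le i s
  · have hxr : x i ≠ r := fun hxr => hx (by simpa [coordSlice, hxr] using congrFun hr x)
    have key : ∀ a r s t : ZMod 3, t ≠ s → r ≠ t → r ≠ s → a ≠ r →
        (t - s) * (a - s) = if a = t then 1 else 0 := by decide
    simpa using key (x i) r s t hts hrt hrs hxr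

end AnnihilatesPolys

theorem le_mul_of_le_sq_of_le_sq {m a b : ℕ} (ha : m ≤ a ^ 2) (hb : m ≤ b ^ 2) : m ≤ a * b := by
  rcases le_total a b with h | h <;> nlinarith

theorem four_mul_le_sq_add_of_le_sq {m a b : ℕ} (ha : m ≤ a ^ 2) (hb : m ≤ b ^ 2) :
    4 * m ≤ (a + b) ^ 2 := by
  nlinarith [le_mul_of_le_sq_of_le_sq ha hb]

theorem nine_mul_le_sq_add_add_of_le_sq {m a b c : ℕ} (ha : m ≤ a ^ 2) (hb : m ≤ b ^ 2)
    (hc : m ≤ c ^ 2) : 9 * m ≤ (a + b + c) ^ 2 := by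
  nlinarith [le_mul_of_le_sq_of_le_sq ha hb, le_mul_of_le_sq_of_le_sq hb hc,
    le_mul_of_le_sq_of_le_sq ha hc]

theorem three_pow_le_card_support_sq {c : (σ → ZMod 3) → ZMod 3} {d : ℕ} (hc : c ≠ 0)
    (h : AnnihilatesPolys c d) : 3 ^ d ≤ #{x | c x ≠ 0} ^ 2 := by
  induction d using Nat.strong_induction_on generalizing c with
  | _ d ih =>
  have h2 := h.two_le_card_support hc
  rcases d with _ | _ | e
  · nlinarith
  · rw [zero_add, pow_one]
    nlinarith
  obtain ⟨u, hu, v, hv, huv⟩ := one_lt_card.mp h2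
  obtain ⟨i, hi⟩ := Function.ne_iff.mp huv
  simp only [mem_filter, mem_univ, true_and] at hu hv
  rw [card_support_eq_sum_card_support_coordSlice c i]
  set s := fun t => #{x | coordSlice c i t x ≠ 0}
  by_cases hall : ∀ t, coordSlice c i t ≠ 0
  · have hs (t) : 3 ^ e ≤ s t ^ 2 :=
      ih e (by omega) (hall t) ((add_comm e 2 ▸ h).coordSlice_zmod_three i t)
    calc 3 ^ (e + 2) = 9 * 3 ^ e := by ring
      _ ≤ (s 0 + s 1 + s 2) ^ 2 := nine_mul_le_sq_add_add_of_le_sq (hs 0) (hs 1) (hs 2)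
      _ = (∑ t, s t) ^ 2 := congrArg (· ^ 2) (Fin.sum_univ_three s).symm
  · push Not at hall
    obtain ⟨r, hr⟩ := hall
    have hs {t t'} (ht : coordSlice c i t ≠ 0) (ht' : coordSlice c i t' ≠ 0) (htt' : t ≠ t') :
        3 ^ (e + 1) ≤ s t ^ 2 :=
      ih (e + 1) (by omega) ht ((add_comm (e + 1) 1 ▸ h).coordSlice_of_coordSlice_eq_zero hr htt'
        (fun h => ht (h ▸ hr)) (fun h => ht' (h ▸ hr)))
    have hu' := coordSlice_ne_zero hu i
    have hv' := coordSlice_ne_zero hv i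
    calc 3 ^ (e + 2) = 3 * 3 ^ (e + 1) := by ring
      _ ≤ 4 * 3 ^ (e + 1) := by gcongr; norm_num
      _ ≤ (s (u i) + s (v i)) ^ 2 :=
        four_mul_le_sq_add_of_le_sq (hs hu' hv' hi) (hs hv' hu' hi.symm)
      _ ≤ (∑ t, s t) ^ 2 :=
        Nat.pow_le_pow_left ((sum_pair hi).symm.trans_le (sum_le_sum_of_subset (subset_univ _))) 2

end Annihilation

def reducedExp (k : ℕ) : ℕ := min k (2 - k % 2)

theorem ZMod.pow_eq_pow_reducedExp (t : ZMod 3) : ∀ k, t ^ k = t ^ reducedExp k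
  | 0 | 1 | 2 => rfl
  | k + 3 => by
    rw [pow_add, ZMod.pow_card, ← pow_succ, ZMod.pow_eq_pow_reducedExp t (k + 1)]
    congr 1
    simp only [reducedExp]
    omega

section Evaluation

open Finset MvPolynomial

theorem annihilatesPolys_of_sum_mul_evalVec {n d : ℕ} {c : (Fin n → ZMod 3) → ZMod 3}
    (h : ∀ a : MonIdx n d, ∑ x, c x * evalVec x a = 0) : AnnihilatesPolys c d := by
  intro P hP
  have hmon : ∀ m ∈ P.support, ∑ x, c x * ∏ i, x i ^ m i = 0 := by
    intro m hm
    have hdeg : ∑ i, ((⟨reducedExp (m i), by simp [reducedExp]; omega⟩ : Fin 3) : ℕ) ≤ d :=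
      calc ∑ i, reducedExp (m i) ≤ ∑ i, m i := sum_le_sum fun i _ => min_le_left _ _
        _ ≤ d := by simpa [Finsupp.sum_fintype] using (le_totalDegree hm).trans hP
    simpa [evalVec, ← ZMod.pow_eq_pow_reducedExp] using h ⟨_, hdeg⟩
  simp_rw [eval_eq', mul_sum]
  rw [sum_comm]
  refine sum_eq_zero fun m hm => ?_
  simp_rw [mul_left_comm (c _), ← mul_sum, hmon m hm, mul_zero]

theorem linearIndepOn_evalVec {n d : ℕ} {s : Set (Fin n → ZMod 3)} (hs : s.ncard ^ 2 < 3 ^ d) :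
    LinearIndepOn (ZMod 3) (evalVec (d := d)) s := by
  rw [linearIndepOn_iff]
  intro l hl hcomb
  by_contra hl0
  have hann : AnnihilatesPolys (σ := Fin n) l d := annihilatesPolys_of_sum_mul_evalVec fun a => by
    simpa [Finsupp.linearCombination_apply, Finsupp.sum_fintype, mul_comm] using
      congrFun hcomb a
  have hsupp : #{x | l x ≠ 0} ≤ s.ncard := by
    rw [← Set.ncard_coe_finset]
    exact Set.ncard_le_ncard (fun x hx => hl (by simpa using hx)) s.toFinite
  have := three_pow_le_card_support_sq (DFunLike.coe_injective.ne hl0) hann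
  have := Nat.pow_le_pow_left hsupp 2
  omega

end Evaluation

open Matrix

theorem Matrix.rank_transpose_mul_diagonal_mul {K m n : Type*} [Field K] [Fintype m]
    [DecidableEq m] [Fintype n] {B : Matrix m n K} (hB : LinearIndependent K B.row)
    {w : m → K} (hw : ∀ i, w i ≠ 0) :
    (Bᵀ * diagonal w * B).rank = Fintype.card m := by
  have hinj : Function.Injective Bᵀ.mulVecLin := mulVec_injective_iff.mpr hB
  have hD : IsUnit (diagonal w).det := by
    simpa [det_diagonal, Finset.prod_ne_zero_iff] using hw
  rw [Matrix.mul_assoc, rank, mulVecLin_mul, LinearMap.range_comp,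
    ← (Submodule.equivMapOfInjective _ hinj _).finrank_eq, ← rank,
    rank_mul_eq_right_of_isUnit_det _ _ hD, hB.rank_matrix]

def evalMatrix (d : ℕ) {n : ℕ} (s : Set (Fin n → ZMod 3)) : Matrix s (MonIdx n d) (ZMod 3) :=
  of fun x a => evalVec x.1 a

theorem Qmat_eq_transpose_mul_diagonal_mul (n d : ℕ) (β : (Fin n → ZMod 3) → ZMod 3) :
    Qmat n d β = (evalMatrix d {x | β x ≠ 0})ᵀ * diagonal (fun x : {x | β x ≠ 0} => β x) *
      evalMatrix d {x | β x ≠ 0} := by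
  ext a b
  rw [Qmat, ← Finset.sum_filter_of_ne (p := fun x => β x ≠ 0) fun x _ h => left_ne_zero_of_mul h,
    Finset.sum_subtype (p := (· ∈ {x | β x ≠ 0})) _ (by simp), mul_apply]
  simp only [mul_diagonal, transpose_apply, evalMatrix, of_apply]
  exact Finset.sum_congr rfl fun x _ => by ring

theorem sq_lt_pow_of_lt_rpow_half {b d Δ : ℕ} (h : (Δ : ℝ) < (b : ℝ) ^ ((d : ℝ) / 2)) :
    Δ ^ 2 < b ^ d := by
  have hsq : ((b : ℝ) ^ ((d : ℝ) / 2)) ^ 2 = (b : ℝ) ^ d := by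
    rw [← Real.rpow_mul_natCast (by positivity)]
    norm_num
  exact_mod_cast (pow_lt_pow_left₀ h (by positivity) two_ne_zero).trans_eq hsq

theorem rank_Q_eq_dist_general (n d Δ : ℕ) (β : (Fin n → ZMod 3) → ZMod 3)
    (hsupp : {x | β x ≠ 0}.ncard = Δ)
    (hΔ : (Δ : ℝ) < 3 ^ ((d : ℝ) / 2)) :
    (Qmat n d β).rank = Δ := by
  have hΔsq : Δ ^ 2 < 3 ^ d := sq_lt_pow_of_lt_rpow_half (by exact_mod_cast hΔ)
  have hind : LinearIndependent (ZMod 3) (evalMatrix d {x | β x ≠ 0}).row :=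
    linearIndepOn_evalVec (hsupp ▸ hΔsq)
  rw [Qmat_eq_transpose_mul_diagonal_mul, rank_transpose_mul_diagonal_mul hind fun x => x.2,
    ← Nat.card_eq_fintype_card, Nat.card_coe_set_eq, hsupp]

/-- If `β` is a minimum-support representative of its coset modulo
`P^n_{2n-2d-1}` with support size `Δ < 3^{d/2}`, then `rank(Q^β) = Δ`. -/
theorem rank_Q_eq_dist (n d Δ : ℕ) (β : (Fin n → ZMod 3) → ZMod 3)
    (hsupp : {x | β x ≠ 0}.ncard = Δ)
    (hmin : ∀ g ∈ PolyFns 3 n (2 * n - 2 * d - 1), Δ ≤ {x | β x ≠ g x}.ncard)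
    (hΔ : (Δ : ℝ) < 3 ^ ((d : ℝ) / 2)) :
    (Qmat n d β).rank = Δ :=
  rank_Q_eq_dist_general n d Δ β hsupp hΔ
end
end
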